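/- arXiv:2112.09247 — 2 statements merged into one kernel-verified Lean document; each statement's English description precedes it below -/
import Mathlib

section
/- Let Ω ⊆ ℝⁿ be a bounded open set and let Λ ≥ 0. Suppose (p_k) is a sequence of reals with p_k > 4 and p_k → ∞, and for each k, λ_k > 0 and u_k : closure(Ω) → ℝ is a continuous viscosity solution of −Δ_{p_k} u = λ_k e^{u} in Ω with u_k = 0 on ∂Ω. Assume λ_k^{1/p_k}/p_k → Λ as k → ∞ and that u_k/p_k converges uniformly on closure(Ω) to a function u. Then u is a continuous viscosity solution of min{|∇u| − Λ e^{u}, −Δ_∞ u} = 0 in Ω with u = 0 on ∂Ω. -/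
open Real Set Metric Filter Topology

/-- `⟨D²φ(x)∇φ(x), ∇φ(x)⟩`, i.e. `Δ_∞φ(x)`. -/
noncomputable def hessQ {n : ℕ} (φ : EuclideanSpace ℝ (Fin n) → ℝ)
    (x : EuclideanSpace ℝ (Fin n)) : ℝ :=
  iteratedFDeriv ℝ 2 φ x ![gradient φ x, gradient φ x]

/-- Viscosity supersolution of `min{|∇u| − Λ e^u, −Δ_∞ u} = 0` in `Ω`. -/
def IsInftySuper {n : ℕ} (Ω : Set (EuclideanSpace ℝ (Fin n))) (Λ : ℝ)
    (u : EuclideanSpace ℝ (Fin n) → ℝ) : Prop :=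
  ∀ x₀ ∈ Ω, ∀ φ : EuclideanSpace ℝ (Fin n) → ℝ, ContDiff ℝ 2 φ →
    IsLocalMinOn (fun x => u x - φ x) Ω x₀ →
    (0 ≤ ‖gradient φ x₀‖ - Λ * Real.exp (u x₀) ∧ 0 ≤ -(hessQ φ x₀))

/-- Viscosity subsolution of `min{|∇u| − Λ e^u, −Δ_∞ u} = 0` in `Ω`. -/
def IsInftySub {n : ℕ} (Ω : Set (EuclideanSpace ℝ (Fin n))) (Λ : ℝ)
    (u : EuclideanSpace ℝ (Fin n) → ℝ) : Prop :=
  ∀ x₀ ∈ Ω, ∀ φ : EuclideanSpace ℝ (Fin n) → ℝ, ContDiff ℝ 2 φ →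
    IsLocalMaxOn (fun x => u x - φ x) Ω x₀ →
    min (‖gradient φ x₀‖ - Λ * Real.exp (u x₀)) (-(hessQ φ x₀)) ≤ 0

/-- Viscosity solution of `min{|∇u| − Λ e^u, −Δ_∞ u} = 0` in `Ω`. -/
def IsInftySol {n : ℕ} (Ω : Set (EuclideanSpace ℝ (Fin n))) (Λ : ℝ)
    (u : EuclideanSpace ℝ (Fin n) → ℝ) : Prop :=
  IsInftySuper Ω Λ u ∧ IsInftySub Ω Λ u

/-- The Laplacian `Δφ(x)`, as the trace of the Hessian. -/
noncomputable def lapl {n : ℕ} (φ : EuclideanSpace ℝ (Fin n) → ℝ)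
    (x : EuclideanSpace ℝ (Fin n)) : ℝ :=
  ∑ i : Fin n, iteratedFDeriv ℝ 2 φ x ![EuclideanSpace.single i 1, EuclideanSpace.single i 1]

/-- Viscosity supersolution of `−Δ_p u = λ e^u` in `Ω` (expanded form, for `p > 4`). -/
def IsPSuper {n : ℕ} (Ω : Set (EuclideanSpace ℝ (Fin n))) (p lam : ℝ)
    (u : EuclideanSpace ℝ (Fin n) → ℝ) : Prop :=
  ∀ x₀ ∈ Ω, ∀ φ : EuclideanSpace ℝ (Fin n) → ℝ, ContDiff ℝ 2 φ →
    IsLocalMinOn (fun x => u x - φ x) Ω x₀ →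
    lam * Real.exp (u x₀) ≤
      -(‖gradient φ x₀‖ ^ (p - 4) *
        (‖gradient φ x₀‖ ^ 2 * lapl φ x₀ + (p - 2) * hessQ φ x₀))

/-- Viscosity subsolution of `−Δ_p u = λ e^u` in `Ω` (expanded form, for `p > 4`). -/
def IsPSub {n : ℕ} (Ω : Set (EuclideanSpace ℝ (Fin n))) (p lam : ℝ)
    (u : EuclideanSpace ℝ (Fin n) → ℝ) : Prop :=
  ∀ x₀ ∈ Ω, ∀ φ : EuclideanSpace ℝ (Fin n) → ℝ, ContDiff ℝ 2 φ →
    IsLocalMaxOn (fun x => u x - φ x) Ω x₀ →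
    -(‖gradient φ x₀‖ ^ (p - 4) *
        (‖gradient φ x₀‖ ^ 2 * lapl φ x₀ + (p - 2) * hessQ φ x₀)) ≤
      lam * Real.exp (u x₀)

/-- Viscosity solution of `−Δ_p u = λ e^u` in `Ω`. -/
def IsPSol {n : ℕ} (Ω : Set (EuclideanSpace ℝ (Fin n))) (p lam : ℝ)
    (u : EuclideanSpace ℝ (Fin n) → ℝ) : Prop :=
  IsPSuper Ω p lam u ∧ IsPSub Ω p lam u

/-!
If `U - φ` has a local minimum at `x₀ ∈ Ω`, replacing `φ` by `φ - |x - x₀|⁴` makes the minimum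
strict without changing `∇φ(x₀)` or `D²φ(x₀)`. Uniform convergence then produces minimum points
`x_k → x₀` of `u_k / p_k - φ`, where the equation for `u_k` can be tested with `p_k φ`:
`λ_k e^{u_k(x_k)} ≤ p_k^{p_k-1} |∇φ|^{p_k-4} (-|∇φ|² Δφ - (p_k-2) Δ_∞φ)` at `x_k`.
The left side is positive, so after dividing by `p_k` the limit gives `Δ_∞φ(x₀) ≤ 0`; taking
`p_k`-th roots and dividing by `p_k` turns the left side into `Λ e^{U(x₀)}` and the right side into
`|∇φ(x₀)|`. For subsolutions only the case `Δ_∞φ(x₀) < 0` needs testing, and then the bracket is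
at least of order `p_k`, which gives the reverse inequality `|∇φ(x₀)| ≤ Λ e^{U(x₀)}`.
-/

section InnerProductSpace

variable {F : Type*} [NormedAddCommGroup F] [InnerProductSpace ℝ F]

theorem gradient_const_mul [CompleteSpace F] (c : ℝ) {f : F → ℝ} {x : F}
    (hf : DifferentiableAt ℝ f x) : gradient (fun y => c * f y) x = c • gradient f x := by
  simp only [gradient, ← smul_eq_mul, fderiv_fun_const_smul hf, map_smul]

theorem ContDiff.continuous_gradient [CompleteSpace F] {f : F → ℝ} (hf : ContDiff ℝ 2 f) :
    Continuous (gradient f) :=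
  (InnerProductSpace.toDual ℝ F).symm.continuous.comp (hf.continuous_fderiv two_ne_zero)

theorem contDiff_norm_sub_pow_four (x₀ : F) : ContDiff ℝ 2 fun x : F => ‖x - x₀‖ ^ 4 := by
  have h : ContDiff ℝ 2 fun x : F => (‖x - x₀‖ ^ 2) ^ 2 :=
    ((contDiff_id.sub contDiff_const).norm_sq ℝ).pow 2
  simpa only [← pow_mul] using h

theorem hasFDerivAt_norm_sub_sq (x₀ x : F) :
    HasFDerivAt (fun y => ‖y - x₀‖ ^ 2) (2 • innerSL ℝ (x - x₀)) x := by
  simpa using ((hasFDerivAt_id x).sub_const x₀).norm_sq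

theorem hasFDerivAt_norm_sub_pow_four (x₀ x : F) :
    HasFDerivAt (fun y => ‖y - x₀‖ ^ 4) ((4 * ‖x - x₀‖ ^ 2) • innerSL ℝ (x - x₀)) x := by
  have h := (hasFDerivAt_norm_sub_sq x₀ x).pow 2
  refine (h.congr_fderiv ?_).congr_of_eventuallyEq (.of_forall fun y => by simp [← pow_mul])
  ext y
  simp only [Nat.add_one_sub_one, pow_one, nsmul_eq_mul, Nat.cast_ofNat, map_sub, smul_apply,
    sub_apply, coe_innerSL_apply, smul_eq_mul]
  ring

theorem iteratedFDeriv_two_norm_sub_pow_four_self (x₀ : F) :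
    iteratedFDeriv ℝ 2 (fun y => ‖y - x₀‖ ^ 4) x₀ = 0 := by
  -- the derivative `(4 ‖x - x₀‖²) • ⟪x - x₀, ·⟫` is a product of two factors vanishing at `x₀`
  have hc : HasFDerivAt (fun x => 4 * ‖x - x₀‖ ^ 2) ((4 : ℝ) • 2 • innerSL ℝ (x₀ - x₀)) x₀ :=
    (hasFDerivAt_norm_sub_sq x₀ x₀).const_mul 4
  have hf : HasFDerivAt (fun x : F => innerSL ℝ (x - x₀)) (innerSL ℝ) x₀ :=
    (innerSL ℝ).hasFDerivAt.comp x₀ ((hasFDerivAt_id x₀).sub_const x₀)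
  have h2 : fderiv ℝ (fderiv ℝ fun y => ‖y - x₀‖ ^ 4) x₀ = 0 := by
    rw [funext fun x => (hasFDerivAt_norm_sub_pow_four x₀ x).fderiv, (hc.fun_smul hf).fderiv]
    simp
  ext m
  rw [iteratedFDeriv_two_apply, h2]
  rfl

theorem gradient_add_mul_norm_sub_pow_four [CompleteSpace F] {φ : F → ℝ} {x₀ : F}
    (hφ : DifferentiableAt ℝ φ x₀) (c : ℝ) :
    gradient (fun x => φ x + c * ‖x - x₀‖ ^ 4) x₀ = gradient φ x₀ := by
  have h := hφ.hasFDerivAt.fun_add ((hasFDerivAt_norm_sub_pow_four x₀ x₀).const_mul c)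
  simp only [sub_self, norm_zero, map_zero, smul_zero, add_zero] at h
  rw [gradient, gradient, h.fderiv]

end InnerProductSpace

theorem iteratedFDeriv_two_const_mul {V : Type*} [NormedAddCommGroup V] [NormedSpace ℝ V]
    (c : ℝ) {f : V → ℝ} (hf : ContDiff ℝ 2 f) (x : V) (m : Fin 2 → V) :
    iteratedFDeriv ℝ 2 (fun y => c * f y) x m = c * iteratedFDeriv ℝ 2 f x m :=
  congrArg (· m) (iteratedFDeriv_const_smul_apply (a := c) hf.contDiffAt)

/-- `pLaplacianForm p |∇φ| Δφ Δ_∞φ` is the expanded `p`-Laplacian of `IsPSuper` and `IsPSub`. -/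
noncomputable def pLaplacianForm (p g L H : ℝ) : ℝ := g ^ (p - 4) * (g ^ 2 * L + (p - 2) * H)

theorem pLaplacianForm_mul {c : ℝ} (hc : 0 < c) (p : ℝ) {g : ℝ} (hg : 0 ≤ g) (L H : ℝ) :
    pLaplacianForm p (c * g) (c * L) (c ^ 3 * H) = c ^ (p - 1) * pLaplacianForm p g L H := by
  have hc' : c ^ (p - 1) = c ^ (p - 4) * c ^ 3 := by
    rw [← rpow_natCast, ← rpow_add hc]
    ring_nf
  rw [pLaplacianForm, pLaplacianForm, mul_rpow hc.le hg, hc']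
  ring

theorem IsLocalMinOn.exists_closedBall_subset {X β : Type*} [PseudoMetricSpace X] [Preorder β]
    {f : X → β} {s : Set X} {x₀ : X} (hf : IsLocalMinOn f s x₀) (hs : s ∈ 𝓝 x₀) :
    ∃ r > 0, closedBall x₀ r ⊆ s ∧ ∀ x ∈ closedBall x₀ r, f x₀ ≤ f x := by
  obtain ⟨r, hr, hsub⟩ := nhds_basis_closedBall.mem_iff.1 (inter_mem hs (hf.isLocalMin hs))
  exact ⟨r, hr, fun x hx => (hsub hx).1, fun x hx => (hsub hx).2⟩

theorem tendsto_of_isMinOn_of_tendstoUniformlyOn {X ι : Type*} [SeminormedAddCommGroup X]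
    {l : Filter ι} {K : Set X} {x₀ : X} {v : ι → X → ℝ} {W : X → ℝ} {xs : ι → X}
    (hv : TendstoUniformlyOn v W l K) (hx₀ : x₀ ∈ K)
    (hW : ∀ x ∈ K, W x₀ + ‖x - x₀‖ ^ 4 ≤ W x) (hxs : ∀ i, xs i ∈ K)
    (hmin : ∀ i, IsMinOn (v i) K (xs i)) : Tendsto xs l (𝓝 x₀) := by
  refine Metric.tendsto_nhds.2 fun δ hδ => ?_
  filter_upwards [Metric.tendstoUniformlyOn_iff.1 hv (δ ^ 4 / 2) (by positivity)] with i hi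
  have h₀ := hi x₀ hx₀
  have h₁ := hi (xs i) (hxs i)
  have hle : v i (xs i) ≤ v i x₀ := hmin i hx₀
  rw [Real.dist_eq, abs_lt] at h₀ h₁
  have : ‖xs i - x₀‖ ^ 4 < δ ^ 4 := by linarith [hW (xs i) (hxs i)]
  rw [dist_eq_norm]
  exact lt_of_pow_lt_pow_left₀ 4 hδ.le this

theorem exists_tendsto_isLocalMinOn_sub_mul {X : Type*} [NormedAddCommGroup X] [ProperSpace X]
    {Ω : Set X} (hΩ : IsOpen Ω) {p : ℕ → ℝ} (hp : ∀ᶠ k in atTop, 0 < p k) {u : ℕ → X → ℝ}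
    (hu : ∀ k, ContinuousOn (u k) (closure Ω))
    {U : X → ℝ} (hconv : TendstoUniformlyOn (fun k x => u k x / p k) U atTop (closure Ω))
    {x₀ : X} (hx₀ : x₀ ∈ Ω) {φ : X → ℝ} (hφ : Continuous φ)
    (hmin : IsLocalMinOn (fun x => U x - φ x) Ω x₀) :
    ∃ xs : ℕ → X, Tendsto xs atTop (𝓝 x₀) ∧
      Tendsto (fun k => u k (xs k) / p k) atTop (𝓝 (U x₀)) ∧
      ∀ᶠ k in atTop, xs k ∈ Ω ∧
        IsLocalMinOn (fun x => u k x - p k * (φ x - ‖x - x₀‖ ^ 4)) Ω (xs k) := by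
  set ψ : X → ℝ := fun x => φ x - ‖x - x₀‖ ^ 4
  have hψ : Continuous ψ := hφ.sub ((continuous_id.sub continuous_const).norm.pow 4)
  obtain ⟨r, hr, hrΩ, hr_min⟩ := hmin.exists_closedBall_subset (hΩ.mem_nhds hx₀)
  have hK : closedBall x₀ r ⊆ closure Ω := hrΩ.trans subset_closure
  have hex : ∀ k, ∃ y ∈ closedBall x₀ r,
      IsMinOn (fun x => u k x / p k - ψ x) (closedBall x₀ r) y := fun k =>
    (isCompact_closedBall x₀ r).exists_isMinOn (nonempty_closedBall.2 hr.le)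
      ((((hu k).div_const (p k)).sub hψ.continuousOn).mono hK)
  choose xs hxsK hxs_min using hex
  have hψu : TendstoUniformlyOn (fun _ : ℕ => ψ) ψ atTop (closedBall x₀ r) :=
    fun _ hV => .of_forall fun _ _ _ => refl_mem_uniformity hV
  have hxs : Tendsto xs atTop (𝓝 x₀) := by
    refine tendsto_of_isMinOn_of_tendstoUniformlyOn ((hconv.mono hK).sub hψu)
      (mem_closedBall_self hr.le) (fun x hx => ?_) hxsK hxs_min
    have := hr_min x hx
    simp only [Pi.sub_apply, ψ, sub_self, norm_zero]
    linarith
  have hU : ContinuousWithinAt U (closure Ω) x₀ :=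
    (hconv.continuousOn (.of_forall fun k => (hu k).div_const _)).continuousWithinAt
      (subset_closure hx₀)
  refine ⟨xs, hxs, hconv.tendsto_comp hU
    (tendsto_nhdsWithin_iff.2 ⟨hxs, .of_forall fun k => hK (hxsK k)⟩), ?_⟩
  filter_upwards [hxs.eventually (isOpen_ball.mem_nhds (mem_ball_self hr)), hp] with k hk hpk
  have hmul : ∀ y, u k y - p k * ψ y = p k * (u k y / p k - ψ y) := fun y => by
    field_simp
  refine ⟨hrΩ (ball_subset_closedBall hk), ?_⟩
  refine (((hxs_min k).isLocalMin (mem_of_superset (isOpen_ball.mem_nhds hk)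
    ball_subset_closedBall)).on Ω).mono fun x hx => ?_
  show u k (xs k) - p k * ψ (xs k) ≤ u k x - p k * ψ x
  rw [hmul, hmul]
  exact mul_le_mul_of_nonneg_left hx hpk.le

theorem exists_tendsto_isLocalMaxOn_sub_mul {X : Type*} [NormedAddCommGroup X] [ProperSpace X]
    {Ω : Set X} (hΩ : IsOpen Ω) {p : ℕ → ℝ} (hp : ∀ᶠ k in atTop, 0 < p k) {u : ℕ → X → ℝ}
    (hu : ∀ k, ContinuousOn (u k) (closure Ω))
    {U : X → ℝ} (hconv : TendstoUniformlyOn (fun k x => u k x / p k) U atTop (closure Ω))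
    {x₀ : X} (hx₀ : x₀ ∈ Ω) {φ : X → ℝ} (hφ : Continuous φ)
    (hmax : IsLocalMaxOn (fun x => U x - φ x) Ω x₀) :
    ∃ xs : ℕ → X, Tendsto xs atTop (𝓝 x₀) ∧
      Tendsto (fun k => u k (xs k) / p k) atTop (𝓝 (U x₀)) ∧
      ∀ᶠ k in atTop, xs k ∈ Ω ∧
        IsLocalMaxOn (fun x => u k x - p k * (φ x + ‖x - x₀‖ ^ 4)) Ω (xs k) := by
  have hconv' : TendstoUniformlyOn (fun k x => -u k x / p k) (fun x => -U x) atTop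
      (closure Ω) := by
    convert hconv.neg using 1
    · ext k x
      exact neg_div _ _
    · rfl
  have hmin : IsLocalMinOn (fun x => -U x - -φ x) Ω x₀ := by
    simpa only [neg_sub_neg, neg_sub] using hmax.neg
  obtain ⟨xs, hxs, hux, hloc⟩ :=
    exists_tendsto_isLocalMinOn_sub_mul hΩ hp (fun k => (hu k).neg) hconv' hx₀ hφ.neg hmin
  refine ⟨xs, hxs, by simpa only [Pi.neg_apply, neg_div, neg_neg] using hux.neg,
    hloc.mono fun k hk => ⟨hk.1, ?_⟩⟩
  have e : (fun x => u k x - p k * (φ x + ‖x - x₀‖ ^ 4)) =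
      fun x => -(-u k x - p k * (-φ x - ‖x - x₀‖ ^ 4)) := by
    funext x; ring
  rw [e]
  exact hk.2.neg

/-- The normalisation under which `λ_k` tends to `Λ`. -/
noncomputable def rescaledRoot (p X : ℝ) : ℝ := X ^ (1 / p) / p

theorem rescaledRoot_le_rescaledRoot {p X Y : ℝ} (hp : 0 < p) (hX : 0 ≤ X) (h : X ≤ Y) :
    rescaledRoot p X ≤ rescaledRoot p Y :=
  div_le_div_of_nonneg_right (rpow_le_rpow hX h (by positivity)) hp.le

theorem rescaledRoot_mul_exp (p : ℝ) {lam : ℝ} (hlam : 0 ≤ lam) (x : ℝ) :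
    rescaledRoot p (lam * exp x) = rescaledRoot p lam * exp (x / p) := by
  rw [rescaledRoot, rescaledRoot, mul_rpow hlam (exp_pos x).le, ← exp_mul, mul_one_div,
    mul_div_right_comm]

theorem rescaledRoot_mul_rpow_mul_rpow {p C g : ℝ} (hp : 0 < p) (hC : 0 ≤ C) (hg : 0 ≤ g) :
    rescaledRoot p (C * p ^ p * g ^ (p - 4)) = C ^ (1 / p) * g ^ ((p - 4) / p) := by
  rw [rescaledRoot, mul_rpow (by positivity) (rpow_nonneg hg _), mul_rpow hC (by positivity),
    ← rpow_mul hp.le, ← rpow_mul hg, mul_one_div_cancel hp.ne', rpow_one, mul_one_div]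
  field_simp

theorem tendsto_rescaledRoot_mul_rpow_mul_rpow {p g : ℕ → ℝ} {C G : ℝ} (hC : 0 < C)
    (hp : Tendsto p atTop atTop) (hg : Tendsto g atTop (𝓝 G)) (hg₀ : ∀ k, 0 ≤ g k) :
    Tendsto (fun k => rescaledRoot (p k) (C * p k ^ p k * g k ^ (p k - 4))) atTop (𝓝 G) := by
  have hinv : Tendsto (fun k => 1 / p k) atTop (𝓝 0) := by
    simp only [one_div]
    exact tendsto_inv_atTop_zero.comp hp
  have hexp : Tendsto (fun k => (p k - 4) / p k) atTop (𝓝 1) := by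
    have h := (hinv.const_mul 4).const_sub 1
    rw [mul_zero, sub_zero] at h
    refine h.congr' ((hp.eventually_gt_atTop 0).mono fun k hk => ?_)
    field_simp
  have h := (tendsto_const_nhds (x := C).rpow hinv (.inl hC.ne')).mul
    (hg.rpow hexp (.inr one_pos))
  rw [rpow_zero, rpow_one, one_mul] at h
  exact h.congr' ((hp.eventually_gt_atTop 0).mono fun k hk =>
    (rescaledRoot_mul_rpow_mul_rpow hk hC.le (hg₀ k)).symm)

theorem tendsto_rescaledRoot_mul_exp {p lam v : ℕ → ℝ} {Λ V : ℝ} (hlam : ∀ k, 0 ≤ lam k)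
    (hscale : Tendsto (fun k => lam k ^ (1 / p k) / p k) atTop (𝓝 Λ))
    (hv : Tendsto (fun k => v k / p k) atTop (𝓝 V)) :
    Tendsto (fun k => rescaledRoot (p k) (lam k * exp (v k))) atTop (𝓝 (Λ * exp V)) := by
  simp only [rescaledRoot_mul_exp _ (hlam _)]
  exact hscale.mul ((continuous_exp.tendsto _).comp hv)

section Asymptotics

variable {p g L H X : ℕ → ℝ} {G L₀ H₀ A : ℝ}

theorem nonpos_of_tendsto_of_neg_pLaplacianForm_pos (hp : Tendsto p atTop atTop)
    (hg : Tendsto g atTop (𝓝 G)) (hg₀ : ∀ k, 0 ≤ g k) (hL : Tendsto L atTop (𝓝 L₀))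
    (hH : Tendsto H atTop (𝓝 H₀))
    (hpos : ∀ᶠ k in atTop, 0 < -(p k ^ (p k - 1) * pLaplacianForm (p k) (g k) (L k) (H k))) :
    H₀ ≤ 0 := by
  by_contra! hH₀
  set M := |G ^ 2 * L₀| + 1
  have hM : ∀ᶠ k in atTop, |g k ^ 2 * L k| < M :=
    ((hg.pow 2).mul hL).abs.eventually (gt_mem_nhds (lt_add_one _))
  have hHk : ∀ᶠ k in atTop, H₀ / 2 < H k := hH.eventually (lt_mem_nhds (half_lt_self hH₀))
  obtain ⟨k, hk, hMk, hHk, hpk⟩ :=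
    (hpos.and (hM.and (hHk.and (hp.eventually_gt_atTop (2 + 2 * M / H₀))))).exists
  have hp₂ : 0 < p k - 2 := by linarith [show 0 ≤ 2 * M / H₀ by positivity]
  have hB : g k ^ 2 * L k + (p k - 2) * H k < 0 := by
    refine neg_of_mul_neg_right (a := p k ^ (p k - 1) * g k ^ (p k - 4)) ?_
      (mul_nonneg (rpow_nonneg (by linarith) _) (rpow_nonneg (hg₀ k) _))
    rw [pLaplacianForm] at hk
    linarith [mul_assoc (p k ^ (p k - 1)) (g k ^ (p k - 4)) (g k ^ 2 * L k + (p k - 2) * H k)]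
  have h₁ : 2 * M < (p k - 2) * H₀ := (div_lt_iff₀ hH₀).1 (by linarith)
  have h₂ : (p k - 2) * (H₀ / 2) < (p k - 2) * H k :=
    mul_lt_mul_of_pos_left hHk hp₂
  linarith [neg_abs_le (g k ^ 2 * L k)]

theorem le_of_tendsto_rescaledRoot_of_le_neg_pLaplacianForm (hp : Tendsto p atTop atTop)
    (hg : Tendsto g atTop (𝓝 G)) (hg₀ : ∀ k, 0 ≤ g k) (hL : Tendsto L atTop (𝓝 L₀))
    (hH : Tendsto H atTop (𝓝 H₀)) (hX₀ : ∀ k, 0 ≤ X k)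
    (hX : ∀ᶠ k in atTop, X k ≤ -(p k ^ (p k - 1) * pLaplacianForm (p k) (g k) (L k) (H k)))
    (hA : Tendsto (fun k => rescaledRoot (p k) (X k)) atTop (𝓝 A)) : A ≤ G := by
  set M₁ := |G ^ 2 * L₀| + 1
  set M₂ := |H₀| + 1
  have hM₁₀ : 0 < M₁ := by positivity
  have hM₂₀ : 0 < M₂ := by positivity
  have hM₁ : ∀ᶠ k in atTop, |g k ^ 2 * L k| < M₁ :=
    ((hg.pow 2).mul hL).abs.eventually (gt_mem_nhds (lt_add_one _))
  have hM₂ : ∀ᶠ k in atTop, |H k| < M₂ := hH.abs.eventually (gt_mem_nhds (lt_add_one _))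
  have hXY : ∀ᶠ k in atTop, X k ≤ (M₁ + M₂) * p k ^ p k * g k ^ (p k - 4) := by
    filter_upwards [hX, hM₁, hM₂, hp.eventually_ge_atTop 2] with k hk h₁ h₂ hpk
    have hB : -(g k ^ 2 * L k + (p k - 2) * H k) ≤ (M₁ + M₂) * p k := by
      have e₁ : -(g k ^ 2 * L k) < M₁ := (neg_le_abs _).trans_lt h₁
      have e₂ : (p k - 2) * -H k ≤ (p k - 2) * M₂ :=
        mul_le_mul_of_nonneg_left ((neg_le_abs _).trans h₂.le) (by linarith)
      have e₃ : M₁ ≤ M₁ * p k := le_mul_of_one_le_right hM₁₀.le (by linarith)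
      nlinarith
    calc X k ≤ p k ^ (p k - 1) * g k ^ (p k - 4) * -(g k ^ 2 * L k + (p k - 2) * H k) := by
          rw [pLaplacianForm] at hk; linarith
      _ ≤ p k ^ (p k - 1) * g k ^ (p k - 4) * ((M₁ + M₂) * p k) :=
          mul_le_mul_of_nonneg_left hB
            (mul_nonneg (rpow_nonneg (by linarith) _) (rpow_nonneg (hg₀ k) _))
      _ = (M₁ + M₂) * p k ^ p k * g k ^ (p k - 4) := by
          rw [rpow_sub_one (by positivity)]
          field_simp
  refine le_of_tendsto_of_tendsto hA
    (tendsto_rescaledRoot_mul_rpow_mul_rpow (add_pos hM₁₀ hM₂₀) hp hg hg₀) ?_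
  filter_upwards [hXY, hp.eventually_gt_atTop 0] with k hk hpk
  exact rescaledRoot_le_rescaledRoot hpk (hX₀ k) hk

theorem le_of_tendsto_rescaledRoot_of_neg_pLaplacianForm_le (hp : Tendsto p atTop atTop)
    (hg : Tendsto g atTop (𝓝 G)) (hg₀ : ∀ k, 0 ≤ g k) (hL : Tendsto L atTop (𝓝 L₀))
    (hH : Tendsto H atTop (𝓝 H₀)) (hH₀ : H₀ < 0)
    (hX : ∀ᶠ k in atTop, -(p k ^ (p k - 1) * pLaplacianForm (p k) (g k) (L k) (H k)) ≤ X k)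
    (hA : Tendsto (fun k => rescaledRoot (p k) (X k)) atTop (𝓝 A)) : G ≤ A := by
  set c := -H₀ / 4 with hc_def
  have hc : 0 < c := by linarith
  set M := |G ^ 2 * L₀| + 1
  have hM₀ : 0 < M := by positivity
  have hM : ∀ᶠ k in atTop, |g k ^ 2 * L k| < M :=
    ((hg.pow 2).mul hL).abs.eventually (gt_mem_nhds (lt_add_one _))
  have hHk : ∀ᶠ k in atTop, H k < H₀ / 2 := hH.eventually (gt_mem_nhds (by linarith))
  have hYX : ∀ᶠ k in atTop, c * p k ^ p k * g k ^ (p k - 4) ≤ X k := by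
    filter_upwards [hX, hM, hHk, hp.eventually_ge_atTop (4 + M / c)] with k hk h₁ h₂ hpk
    have hp₄ : 4 < p k := by linarith [div_pos hM₀ hc]
    have hcM : M ≤ c * (p k - 4) := by rw [mul_comm, ← div_le_iff₀ hc]; linarith
    have hB : c * p k ≤ -(g k ^ 2 * L k + (p k - 2) * H k) := by
      have e₁ : g k ^ 2 * L k < M := (le_abs_self _).trans_lt h₁
      have e₂ : (p k - 2) * (2 * c) ≤ (p k - 2) * -H k :=
        mul_le_mul_of_nonneg_left (by linarith) (by linarith)
      nlinarith
    calc c * p k ^ p k * g k ^ (p k - 4)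
        = p k ^ (p k - 1) * g k ^ (p k - 4) * (c * p k) := by
          rw [rpow_sub_one (by positivity)]
          field_simp
      _ ≤ p k ^ (p k - 1) * g k ^ (p k - 4) * -(g k ^ 2 * L k + (p k - 2) * H k) :=
          mul_le_mul_of_nonneg_left hB
            (mul_nonneg (rpow_nonneg (by linarith) _) (rpow_nonneg (hg₀ k) _))
      _ ≤ X k := by rw [pLaplacianForm] at hk; linarith
  refine le_of_tendsto_of_tendsto (tendsto_rescaledRoot_mul_rpow_mul_rpow hc hp hg hg₀) hA ?_
  filter_upwards [hYX, hp.eventually_gt_atTop 0] with k hk hpk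
  exact rescaledRoot_le_rescaledRoot hpk
    (mul_nonneg (mul_nonneg hc.le (rpow_nonneg hpk.le _)) (rpow_nonneg (hg₀ k) _)) hk

end Asymptotics

section Euclidean

variable {n : ℕ}
local notation "E" => EuclideanSpace ℝ (Fin n)

theorem hessQ_const_mul (c : ℝ) {f : E → ℝ} (hf : ContDiff ℝ 2 f) (x : E) :
    hessQ (fun y => c * f y) x = c ^ 3 * hessQ f x := by
  have hpair : ![c • gradient f x, c • gradient f x] =
      fun i => c • ![gradient f x, gradient f x] i := by
    funext i; fin_cases i <;> rfl
  rw [hessQ, gradient_const_mul c (hf.differentiable two_ne_zero x),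
    iteratedFDeriv_two_const_mul c hf, hpair, ContinuousMultilinearMap.map_smul_univ]
  simp only [hessQ, Finset.prod_const, Finset.card_fin, smul_eq_mul]
  ring

theorem lapl_const_mul (c : ℝ) {f : E → ℝ} (hf : ContDiff ℝ 2 f) (x : E) :
    lapl (fun y => c * f y) x = c * lapl f x := by
  simp only [lapl, iteratedFDeriv_two_const_mul c hf, Finset.mul_sum]

theorem pLaplacianForm_const_mul {c : ℝ} (hc : 0 < c) (p : ℝ) {φ : E → ℝ}
    (hφ : ContDiff ℝ 2 φ) (x : E) :
    pLaplacianForm p ‖gradient (fun y => c * φ y) x‖ (lapl (fun y => c * φ y) x)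
        (hessQ (fun y => c * φ y) x) =
      c ^ (p - 1) * pLaplacianForm p ‖gradient φ x‖ (lapl φ x) (hessQ φ x) := by
  rw [gradient_const_mul c (hφ.differentiable two_ne_zero x), norm_smul,
    Real.norm_of_nonneg hc.le, lapl_const_mul c hφ, hessQ_const_mul c hφ,
    pLaplacianForm_mul hc p (norm_nonneg _)]

theorem ContDiff.continuous_hessQ {f : E → ℝ} (hf : ContDiff ℝ 2 f) : Continuous (hessQ f) :=
  continuous_eval.comp ((hf.continuous_iteratedFDeriv le_rfl).prodMk
    (continuous_pi fun i => by fin_cases i <;> exact hf.continuous_gradient))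

theorem ContDiff.continuous_lapl {f : E → ℝ} (hf : ContDiff ℝ 2 f) : Continuous (lapl f) :=
  continuous_finsetSum _ fun _ _ =>
    continuous_eval.comp ((hf.continuous_iteratedFDeriv le_rfl).prodMk continuous_const)

theorem hessQ_add_mul_norm_sub_pow_four {φ : E → ℝ} (hφ : ContDiff ℝ 2 φ) (c : ℝ) (x₀ : E) :
    hessQ (fun x => φ x + c * ‖x - x₀‖ ^ 4) x₀ = hessQ φ x₀ := by
  have hq := contDiff_norm_sub_pow_four x₀
  have hsum := iteratedFDeriv_add_apply (i := 2) (x := x₀) hφ.contDiffAt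
    ((contDiff_const (c := c)).mul hq).contDiffAt
  rw [hessQ, hessQ, gradient_add_mul_norm_sub_pow_four (hφ.differentiable two_ne_zero x₀),
    show (fun x => φ x + c * ‖x - x₀‖ ^ 4) = φ + fun x => c * ‖x - x₀‖ ^ 4 from rfl, hsum]
  simp [iteratedFDeriv_two_const_mul c hq, iteratedFDeriv_two_norm_sub_pow_four_self]

theorem isInftySuper_of_tendstoUniformlyOn {Ω : Set E} (hΩ : IsOpen Ω) {Λ : ℝ}
    {p lam : ℕ → ℝ} (hp : Tendsto p atTop atTop) (hlam : ∀ k, 0 < lam k)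
    {u : ℕ → E → ℝ} (hu : ∀ k, ContinuousOn (u k) (closure Ω))
    (hsuper : ∀ k, IsPSuper Ω (p k) (lam k) (u k))
    (hscale : Tendsto (fun k => lam k ^ (1 / p k) / p k) atTop (𝓝 Λ))
    {U : E → ℝ} (hconv : TendstoUniformlyOn (fun k x => u k x / p k) U atTop (closure Ω)) :
    IsInftySuper Ω Λ U := by
  intro x₀ hx₀ φ hφ hmin
  obtain ⟨xs, hxs, hux, hloc⟩ :=
    exists_tendsto_isLocalMinOn_sub_mul hΩ (hp.eventually_gt_atTop 0) hu hconv hx₀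
      hφ.continuous hmin
  set ψ : E → ℝ := fun x => φ x + (-1) * ‖x - x₀‖ ^ 4
  have hψ : ContDiff ℝ 2 ψ := hφ.add (contDiff_const.mul (contDiff_norm_sub_pow_four x₀))
  have hX : ∀ᶠ k in atTop, lam k * exp (u k (xs k)) ≤ -(p k ^ (p k - 1) *
      pLaplacianForm (p k) ‖gradient ψ (xs k)‖ (lapl ψ (xs k)) (hessQ ψ (xs k))) := by
    filter_upwards [hloc, hp.eventually_gt_atTop 0] with k ⟨hxΩ, hk⟩ hpk
    rw [← pLaplacianForm_const_mul hpk _ hψ]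
    refine hsuper k (xs k) hxΩ _ (contDiff_const.mul hψ) ?_
    simpa only [ψ, neg_one_mul, ← sub_eq_add_neg] using hk
  have hg : Tendsto (fun k => ‖gradient ψ (xs k)‖) atTop (𝓝 ‖gradient φ x₀‖) := by
    rw [← gradient_add_mul_norm_sub_pow_four (hφ.differentiable two_ne_zero x₀) (-1)]
    exact (hψ.continuous_gradient.norm.tendsto x₀).comp hxs
  have hH : Tendsto (fun k => hessQ ψ (xs k)) atTop (𝓝 (hessQ φ x₀)) := by
    rw [← hessQ_add_mul_norm_sub_pow_four hφ (-1)]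
    exact (hψ.continuous_hessQ.tendsto x₀).comp hxs
  have hL := (hψ.continuous_lapl.tendsto x₀).comp hxs
  have hA := tendsto_rescaledRoot_mul_exp (fun k => (hlam k).le) hscale hux
  refine ⟨sub_nonneg.2 (le_of_tendsto_rescaledRoot_of_le_neg_pLaplacianForm hp hg
    (fun _ => norm_nonneg _) hL hH (fun k => (mul_pos (hlam k) (exp_pos _)).le) hX hA),
    neg_nonneg.2 (nonpos_of_tendsto_of_neg_pLaplacianForm_pos hp hg (fun _ => norm_nonneg _)
      hL hH (hX.mono fun k hk => (mul_pos (hlam k) (exp_pos _)).trans_le hk))⟩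

theorem isInftySub_of_tendstoUniformlyOn {Ω : Set E} (hΩ : IsOpen Ω) {Λ : ℝ}
    {p lam : ℕ → ℝ} (hp : Tendsto p atTop atTop) (hlam : ∀ k, 0 < lam k)
    {u : ℕ → E → ℝ} (hu : ∀ k, ContinuousOn (u k) (closure Ω))
    (hsub : ∀ k, IsPSub Ω (p k) (lam k) (u k))
    (hscale : Tendsto (fun k => lam k ^ (1 / p k) / p k) atTop (𝓝 Λ))
    {U : E → ℝ} (hconv : TendstoUniformlyOn (fun k x => u k x / p k) U atTop (closure Ω)) :
    IsInftySub Ω Λ U := by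
  intro x₀ hx₀ φ hφ hmax
  rcases le_or_gt 0 (hessQ φ x₀) with hφ₀ | hφ₀
  · exact min_le_of_right_le (neg_nonpos.2 hφ₀)
  refine min_le_of_left_le (sub_nonpos.2 ?_)
  obtain ⟨xs, hxs, hux, hloc⟩ :=
    exists_tendsto_isLocalMaxOn_sub_mul hΩ (hp.eventually_gt_atTop 0) hu hconv hx₀
      hφ.continuous hmax
  set ψ : E → ℝ := fun x => φ x + 1 * ‖x - x₀‖ ^ 4
  have hψ : ContDiff ℝ 2 ψ := hφ.add (contDiff_const.mul (contDiff_norm_sub_pow_four x₀))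
  have hX : ∀ᶠ k in atTop, -(p k ^ (p k - 1) * pLaplacianForm (p k) ‖gradient ψ (xs k)‖
      (lapl ψ (xs k)) (hessQ ψ (xs k))) ≤ lam k * exp (u k (xs k)) := by
    filter_upwards [hloc, hp.eventually_gt_atTop 0] with k ⟨hxΩ, hk⟩ hpk
    rw [← pLaplacianForm_const_mul hpk _ hψ]
    refine hsub k (xs k) hxΩ _ (contDiff_const.mul hψ) ?_
    simpa only [ψ, one_mul] using hk
  have hg : Tendsto (fun k => ‖gradient ψ (xs k)‖) atTop (𝓝 ‖gradient φ x₀‖) := by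
    rw [← gradient_add_mul_norm_sub_pow_four (hφ.differentiable two_ne_zero x₀) 1]
    exact (hψ.continuous_gradient.norm.tendsto x₀).comp hxs
  have hH : Tendsto (fun k => hessQ ψ (xs k)) atTop (𝓝 (hessQ φ x₀)) := by
    rw [← hessQ_add_mul_norm_sub_pow_four hφ 1]
    exact (hψ.continuous_hessQ.tendsto x₀).comp hxs
  have hL := (hψ.continuous_lapl.tendsto x₀).comp hxs
  have hA := tendsto_rescaledRoot_mul_exp (fun k => (hlam k).le) hscale hux
  exact le_of_tendsto_rescaledRoot_of_neg_pLaplacianForm_le hp hg (fun _ => norm_nonneg _) hL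
    hH hφ₀ hX hA

end Euclidean

theorem gelfand_limit_equation_general {n : ℕ} (Ω : Set (EuclideanSpace ℝ (Fin n)))
    (hΩo : IsOpen Ω)
    (Λ : ℝ)
    (p lam : ℕ → ℝ) (hp : Tendsto p atTop atTop)
    (hlam : ∀ k, 0 < lam k)
    (u : ℕ → EuclideanSpace ℝ (Fin n) → ℝ)
    (hu_cont : ∀ k, ContinuousOn (u k) (closure Ω))
    (hu_sol : ∀ k, IsPSol Ω (p k) (lam k) (u k))
    (hu_bdry : ∀ k, ∀ x ∈ frontier Ω, u k x = 0)
    (hscale : Tendsto (fun k => lam k ^ (1 / p k) / p k) atTop (𝓝 Λ))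
    (U : EuclideanSpace ℝ (Fin n) → ℝ)
    (hconv : TendstoUniformlyOn (fun k x => u k x / p k) U atTop (closure Ω)) :
    ContinuousOn U (closure Ω) ∧ (∀ x ∈ frontier Ω, U x = 0) ∧ IsInftySol Ω Λ U :=
  ⟨hconv.continuousOn (.of_forall fun k => (hu_cont k).div_const _),
    fun x hx => tendsto_nhds_unique (hconv.tendsto_at (frontier_subset_closure hx))
      (by simp [hu_bdry _ x hx]),
    isInftySuper_of_tendstoUniformlyOn hΩo hp hlam hu_cont (fun k => (hu_sol k).1) hscale hconv,
    isInftySub_of_tendstoUniformlyOn hΩo hp hlam hu_cont (fun k => (hu_sol k).2) hscale hconv⟩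

/-- Uniform limits of rescaled solutions of the Gelfand problem
`−Δ_{p_k} u = λ_k e^u`, `u = 0` on `∂Ω`, with `λ_k^{1/p_k}/p_k → Λ`, are viscosity
solutions of `min{|∇u| − Λ e^u, −Δ_∞ u} = 0` in `Ω` with `u = 0` on `∂Ω`. -/
theorem gelfand_limit_equation {n : ℕ} (Ω : Set (EuclideanSpace ℝ (Fin n)))
    (hΩo : IsOpen Ω) (hΩb : Bornology.IsBounded Ω)
    (Λ : ℝ) (hΛ : 0 ≤ Λ)
    (p lam : ℕ → ℝ) (hp4 : ∀ k, 4 < p k) (hp : Tendsto p atTop atTop)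
    (hlam : ∀ k, 0 < lam k)
    (u : ℕ → EuclideanSpace ℝ (Fin n) → ℝ)
    (hu_cont : ∀ k, ContinuousOn (u k) (closure Ω))
    (hu_sol : ∀ k, IsPSol Ω (p k) (lam k) (u k))
    (hu_bdry : ∀ k, ∀ x ∈ frontier Ω, u k x = 0)
    (hscale : Tendsto (fun k => lam k ^ (1 / p k) / p k) atTop (𝓝 Λ))
    (U : EuclideanSpace ℝ (Fin n) → ℝ)
    (hconv : TendstoUniformlyOn (fun k x => u k x / p k) U atTop (closure Ω)) :
    ContinuousOn U (closure Ω) ∧ (∀ x ∈ frontier Ω, U x = 0) ∧ IsInftySol Ω Λ U :=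
  gelfand_limit_equation_general Ω hΩo Λ p lam hp hlam u hu_cont hu_sol hu_bdry hscale U hconv
end

section
/- Let Ω ⊆ ℝⁿ be a bounded open set and Λ > 0. Then every continuous viscosity solution u of min{|∇u| − Λ e^{u}, −Δ_∞ u} = 0 in Ω with u = 0 on ∂Ω satisfies u(x) ≥ Λ · dist(x, ∂Ω) for every x ∈ Ω. In particular, u > 0 in Ω and sup_{closure(Ω)} u ≥ Λ · sup_{x ∈ Ω} dist(x, ∂Ω). -/
/-!
Testing the supersolution property with a constant shows that `u` has no interior minimum, so
its minimum over `closure Ω` is attained on `∂Ω`, where `u = 0`; hence `u ≥ 0` and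
`|∇u| ≥ Λ e^u ≥ Λ` in the viscosity sense. On the ball `B(x₀, r)`, `r = dist(x₀, ∂Ω)`, compare `u`
with the smoothed cones `c √(|x - x₀|² + δ²)`, `c < Λ`: if `u(x₀) < c r`, then `u` plus such a cone
has a minimum inside the ball, at which the cone is an admissible test function whose gradient
has norm at most `c < Λ`, a contradiction.
-/

open Real Set Metric Filter Topology

section SmoothCone

variable {E : Type*} [NormedAddCommGroup E]

noncomputable def smoothCone (x₀ : E) (δ : ℝ) (x : E) : ℝ :=
  √(‖x - x₀‖ ^ 2 + δ ^ 2)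

variable {x₀ : E} {δ : ℝ}

theorem smoothCone_self : smoothCone x₀ δ x₀ = |δ| := by
  simp [smoothCone, sqrt_sq_eq_abs]

theorem dist_le_smoothCone (x : E) : dist x x₀ ≤ smoothCone x₀ δ x :=
  le_sqrt_of_sq_le (by rw [dist_eq_norm]; nlinarith [sq_nonneg δ])

variable [InnerProductSpace ℝ E]

theorem contDiff_smoothCone {k : WithTop ℕ∞} (hδ : δ ≠ 0) : ContDiff ℝ k (smoothCone x₀ δ) :=
  (((contDiff_norm_sq ℝ).comp (contDiff_id.sub contDiff_const)).add contDiff_const).sqrt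
    fun x => (by positivity : 0 < ‖x - x₀‖ ^ 2 + δ ^ 2).ne'

theorem norm_fderiv_smoothCone_le (hδ : δ ≠ 0) (x : E) :
    ‖fderiv ℝ (smoothCone x₀ δ) x‖ ≤ 1 := by
  have hq : 0 < ‖x - x₀‖ ^ 2 + δ ^ 2 := by positivity
  have hd : HasFDerivAt (smoothCone x₀ δ) _ x :=
    (((hasFDerivAt_id x).sub_const x₀).norm_sq.add_const (δ ^ 2)).sqrt hq.ne'
  have hv : ‖x - x₀‖ ≤ √(‖x - x₀‖ ^ 2 + δ ^ 2) :=
    (dist_eq_norm x x₀).symm.le.trans (dist_le_smoothCone x)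
  rw [hd.fderiv]
  refine ContinuousLinearMap.opNorm_le_bound _ zero_le_one fun y => ?_
  have hs : 0 < √(‖x - x₀‖ ^ 2 + δ ^ 2) := sqrt_pos.2 hq
  simp only [id_eq, ContinuousLinearMap.comp_id, smul_apply, coe_innerSL_apply, nsmul_eq_mul,
    Nat.cast_ofNat, smul_eq_mul, norm_mul, norm_div, norm_one, norm_eq_abs, one_mul,
    abs_of_pos hs]
  calc _ = |inner ℝ (x - x₀) y| / √(‖x - x₀‖ ^ 2 + δ ^ 2) := by field_simp
    _ ≤ ‖x - x₀‖ * ‖y‖ / √(‖x - x₀‖ ^ 2 + δ ^ 2) := by gcongr; exact abs_real_inner_le_norm _ _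
    _ ≤ ‖y‖ := by
      rw [div_le_iff₀ hs, mul_comm]
      exact mul_le_mul_of_nonneg_left hv (norm_nonneg y)

theorem norm_gradient_eq_norm_fderiv [CompleteSpace E] (f : E → ℝ) (x : E) :
    ‖gradient f x‖ = ‖fderiv ℝ f x‖ :=
  (InnerProductSpace.toDual ℝ E).symm.norm_map _

theorem norm_gradient_neg_mul_smoothCone_le [CompleteSpace E] {c : ℝ} (hδ : δ ≠ 0)
    (hc : 0 ≤ c) (x : E) : ‖gradient (fun y => -(c * smoothCone x₀ δ y)) x‖ ≤ c := by
  rw [norm_gradient_eq_norm_fderiv, fderiv_fun_neg,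
    fderiv_const_mul ((contDiff_smoothCone hδ).differentiable one_ne_zero x), norm_neg, norm_smul,
    norm_of_nonneg hc]
  exact mul_le_of_le_one_right hc (norm_fderiv_smoothCone_le hδ x)

end SmoothCone

section Eikonal

variable {E : Type*} [NormedAddCommGroup E] [InnerProductSpace ℝ E]

/-- Viscosity supersolutions of the eikonal inequality `|∇u| ≥ Λ` in `U`. -/
def IsEikonalSuper [CompleteSpace E] (U : Set E) (Λ : ℝ) (u : E → ℝ) : Prop :=
  ∀ x ∈ U, ∀ φ : E → ℝ, ContDiff ℝ 2 φ → IsLocalMin (fun y => u y - φ y) x →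
    Λ ≤ ‖gradient φ x‖

theorem IsEikonalSuper.mono [CompleteSpace E] {U V : Set E} {Λ : ℝ} {u : E → ℝ}
    (hu : IsEikonalSuper U Λ u) (hVU : V ⊆ U) : IsEikonalSuper V Λ u :=
  fun x hx => hu x (hVU hx)

theorem IsEikonalSuper.mul_radius_le [ProperSpace E] {x₀ : E} {r Λ : ℝ} {u : E → ℝ}
    (hu : IsEikonalSuper (ball x₀ r) Λ u) (hr : 0 ≤ r)
    (hcont : ContinuousOn u (closedBall x₀ r)) (hnonneg : ∀ x ∈ closedBall x₀ r, 0 ≤ u x) :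
    Λ * r ≤ u x₀ := by
  by_contra! hlt
  have hx₀ := hnonneg x₀ (mem_closedBall_self hr)
  have hr' : 0 < r := hr.lt_of_ne (by rintro rfl; linarith)
  obtain ⟨c, hc_gt, hcΛ⟩ := exists_between ((div_lt_iff₀ hr').2 hlt)
  have hc : 0 < c := (div_nonneg hx₀ hr).trans_lt hc_gt
  have hcr : u x₀ < c * r := (div_lt_iff₀ hr').1 hc_gt
  obtain ⟨δ, hδ, hcδ⟩ := exists_pos_mul_lt (sub_pos.2 hcr) c
  set φ : E → ℝ := fun y => -(c * smoothCone x₀ δ y)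
  have hφ : ContDiff ℝ 2 φ := ((contDiff_smoothCone hδ.ne').const_smul c).neg
  obtain ⟨x₁, hx₁, hmin⟩ := exists_isLocalMin_mem_ball (f := fun y => u y - φ y)
    (hcont.sub hφ.continuous.continuousOn) (mem_closedBall_self hr) fun y hy => by
      have hy_cone : r ≤ smoothCone x₀ δ y := (mem_sphere.1 hy).symm.le.trans (dist_le_smoothCone y)
      have hy_nonneg := hnonneg y (sphere_subset_closedBall hy)
      have hc_cone := mul_le_mul_of_nonneg_left hy_cone hc.le
      simp only [φ, smoothCone_self, abs_of_pos hδ]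
      linarith
  have hgrad_ge := hu x₁ hx₁ φ hφ hmin
  have hgrad_le : ‖gradient φ x₁‖ ≤ c := norm_gradient_neg_mul_smoothCone_le hδ.ne' hc.le x₁
  linarith

end Eikonal

section DistFrontier

variable {E : Type*} [NormedAddCommGroup E] [NormedSpace ℝ E] {Ω : Set E} {x : E}

theorem ball_infDist_frontier_subset (hΩ : IsOpen Ω) (hx : x ∈ Ω) :
    ball x (infDist x (frontier Ω)) ⊆ Ω := fun y hy =>
  (convex_ball x _).isPreconnected.subset_of_closure_inter_subset hΩ
    ⟨x, mem_ball_self (pos_of_mem_ball hy), hx⟩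
    (fun z ⟨hzΩ, hz⟩ => by
      by_contra hz'
      have hzf : z ∈ frontier Ω := by rw [hΩ.frontier_eq]; exact ⟨hzΩ, hz'⟩
      exact (infDist_le_dist_of_mem hzf).not_gt (by rwa [dist_comm] : dist x z < _))
    hy

theorem closedBall_infDist_frontier_subset_closure (hΩ : IsOpen Ω) (hx : x ∈ Ω) :
    closedBall x (infDist x (frontier Ω)) ⊆ closure Ω := by
  rcases eq_or_ne (infDist x (frontier Ω)) 0 with h | h
  · rw [h, closedBall_zero, singleton_subset_iff]
    exact subset_closure hx
  · rw [← closure_ball x h]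
    exact closure_mono (ball_infDist_frontier_subset hΩ hx)

end DistFrontier

namespace IsInftySuper

variable {n : ℕ} {Ω : Set (EuclideanSpace ℝ (Fin n))} {Λ : ℝ} {u : EuclideanSpace ℝ (Fin n) → ℝ}

theorem not_isLocalMinOn (hu : IsInftySuper Ω Λ u) (hΛ : 0 < Λ) {x : EuclideanSpace ℝ (Fin n)}
    (hx : x ∈ Ω) : ¬IsLocalMinOn u Ω x := fun hmin => by
  have h := (hu x hx (fun _ => 0) contDiff_const (by simpa using hmin)).1
  rw [norm_gradient_eq_norm_fderiv, fderiv_const_apply, norm_zero] at h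
  linarith [mul_pos hΛ (exp_pos (u x))]

theorem exists_isMinOn_frontier (hu : IsInftySuper Ω Λ u) (hΛ : 0 < Λ) (hΩo : IsOpen Ω)
    (hΩb : Bornology.IsBounded Ω) (hcont : ContinuousOn u (closure Ω)) (hne : Ω.Nonempty) :
    ∃ z ∈ frontier Ω, IsMinOn u (closure Ω) z := by
  obtain ⟨z, hz, hmin⟩ := hΩb.isCompact_closure.exists_isMinOn hne.closure hcont
  refine ⟨z, ?_, hmin⟩
  rw [hΩo.frontier_eq]
  exact ⟨hz, fun hzΩ => hu.not_isLocalMinOn hΛ hzΩ (hmin.on_subset subset_closure).localize⟩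

theorem nonneg (hu : IsInftySuper Ω Λ u) (hΛ : 0 < Λ) (hΩo : IsOpen Ω)
    (hΩb : Bornology.IsBounded Ω) (hcont : ContinuousOn u (closure Ω))
    (hbdry : ∀ x ∈ frontier Ω, u x = 0) : ∀ x ∈ closure Ω, 0 ≤ u x := fun x hx => by
  obtain ⟨z, hz, hmin⟩ :=
    hu.exists_isMinOn_frontier hΛ hΩo hΩb hcont (closure_nonempty_iff.1 ⟨x, hx⟩)
  exact hbdry z hz ▸ hmin hx

theorem isEikonalSuper (hu : IsInftySuper Ω Λ u) (hΛ : 0 ≤ Λ) (hnonneg : ∀ x ∈ Ω, 0 ≤ u x) :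
    IsEikonalSuper Ω Λ u := fun x hx φ hφ hmin => by
  have h := (hu x hx φ hφ (hmin.on Ω)).1
  have hΛ_le := le_mul_of_one_le_right hΛ (one_le_exp (hnonneg x hx))
  linarith

end IsInftySuper

/-- Every solution of the limit problem is bounded below by
`Λ·dist(·, ∂Ω)`; in particular it is positive in `Ω` and its sup is at least
`Λ · sup_{x∈Ω} dist(x, ∂Ω)`. -/
theorem limit_solutions_lower_bound {n : ℕ} (Ω : Set (EuclideanSpace ℝ (Fin n)))
    (hΩo : IsOpen Ω) (hΩb : Bornology.IsBounded Ω)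
    (Λ : ℝ) (hΛ : 0 < Λ)
    (u : EuclideanSpace ℝ (Fin n) → ℝ)
    (hu_cont : ContinuousOn u (closure Ω))
    (hu_sol : IsInftySol Ω Λ u)
    (hu_bdry : ∀ x ∈ frontier Ω, u x = 0) :
    (∀ x ∈ Ω, Λ * infDist x (frontier Ω) ≤ u x) ∧
    (∀ x ∈ Ω, 0 < u x) ∧
    Λ * sSup ((fun x => infDist x (frontier Ω)) '' Ω) ≤ sSup (u '' closure Ω) := by
  have hsuper := hu_sol.1
  have hnonneg := hsuper.nonneg hΛ hΩo hΩb hu_cont hu_bdry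
  have hlower : ∀ x ∈ Ω, Λ * infDist x (frontier Ω) ≤ u x := fun x hx =>
    have hball := closedBall_infDist_frontier_subset_closure hΩo hx
    ((hsuper.isEikonalSuper hΛ.le fun y hy => hnonneg y (subset_closure hy)).mono
      (ball_infDist_frontier_subset hΩo hx)).mul_radius_le infDist_nonneg (hu_cont.mono hball)
      fun y hy => hnonneg y (hball hy)
  refine ⟨hlower, fun x hx => ?_, ?_⟩
  · obtain ⟨z, hz, -⟩ := hsuper.exists_isMinOn_frontier hΛ hΩo hΩb hu_cont ⟨x, hx⟩
    have hx_dist : 0 < infDist x (frontier Ω) :=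
      (isClosed_frontier.notMem_iff_infDist_pos ⟨z, hz⟩).1 fun h => (hΩo.frontier_eq ▸ h).2 hx
    exact (mul_pos hΛ hx_dist).trans_le (hlower x hx)
  · have hbdd : BddAbove (u '' closure Ω) :=
      (hΩb.isCompact_closure.image_of_continuousOn hu_cont).bddAbove
    rw [← le_div_iff₀' hΛ]
    refine Real.sSup_le ?_ (div_nonneg (Real.sSup_nonneg ?_) hΛ.le)
    · rintro _ ⟨x, hx, rfl⟩
      rw [le_div_iff₀' hΛ]
      exact (hlower x hx).trans (le_csSup hbdd (mem_image_of_mem u (subset_closure hx)))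
    · rintro _ ⟨x, hx, rfl⟩
      exact hnonneg x hx
end
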